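/- Let N = (S, C, R) be a deficiency-one chemical reaction network and suppose (N, K) is a power law kinetic system with reactant-determined interactions (PL-RDK) with T-matrix T that admits a positive equilibrium c* ∈ ℝ^S_{>0}. If y, y' ∈ C are nonterminal complexes, then every positive equilibrium c** ∈ ℝ^S_{>0} of the system satisfies (T_{·,y} − T_{·,y'}) · log(c**/c*) = 0, where log(c**/c*) is the vector with components log(c**_i / c*_i). -/

import Mathlib

open scoped BigOperators Classical

/-- A chemical reaction network (CRN) on a finite species set `S`:
complexes are non-negative vectors in `ℝ^S`, reactions are pairs of complexes,
no reaction is a self-loop, and every complex occurs in some reaction. -/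
structure CRN (S : Type*) [Fintype S] where
  complexes : Finset (S → ℝ)
  reactions : Finset ((S → ℝ) × (S → ℝ))
  complexes_nonneg : ∀ y ∈ complexes, ∀ i, 0 ≤ y i
  mem_source : ∀ r ∈ reactions, r.1 ∈ complexes
  mem_target : ∀ r ∈ reactions, r.2 ∈ complexes
  ne_of_mem : ∀ r ∈ reactions, r.1 ≠ r.2
  cover : ∀ y ∈ complexes, ∃ y', (y, y') ∈ reactions ∨ (y', y) ∈ reactions

namespace CRN

variable {S : Type*} [Fintype S] (N : CRN S)

/-- One-step reaction relation on complexes. -/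
def step (y y' : S → ℝ) : Prop := (y, y') ∈ N.reactions

/-- Reachability along directed reactions. -/
def reach : (S → ℝ) → (S → ℝ) → Prop := Relation.ReflTransGen N.step

/-- A complex is terminal iff it belongs to a terminal strong linkage class,
i.e. everything reachable from it can reach it back. -/
def IsTerminal (y : S → ℝ) : Prop :=
  y ∈ N.complexes ∧ ∀ y', N.reach y y' → N.reach y' y

/-- A nonterminal complex. -/
def Nonterminal (y : S → ℝ) : Prop := y ∈ N.complexes ∧ ¬ N.IsTerminal y

/-- The set of terminal strong linkage classes. -/
def tslc : Set (Set (S → ℝ)) :=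
  {L | ∃ y, N.IsTerminal y ∧ L = {y' | N.reach y y' ∧ N.reach y' y}}

/-- The number `t` of terminal strong linkage classes. -/
noncomputable def numTSLC : ℕ := Nat.card N.tslc

/-- Undirected connectivity (for linkage classes). -/
def linked : (S → ℝ) → (S → ℝ) → Prop :=
  Relation.ReflTransGen (fun a b => (a, b) ∈ N.reactions ∨ (b, a) ∈ N.reactions)

/-- The set of linkage classes (connected components of the reaction digraph). -/
def linkageClasses : Set (Set (S → ℝ)) :=
  {L | ∃ y ∈ N.complexes, L = {y' | y' ∈ N.complexes ∧ N.linked y y'}}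

/-- The number `ℓ` of linkage classes. -/
noncomputable def numLinkageClasses : ℕ := Nat.card N.linkageClasses

/-- The stoichiometric subspace `S = span{y' - y : y → y'}`. -/
def stoichSubspace : Submodule ℝ (S → ℝ) :=
  Submodule.span ℝ {v | ∃ r ∈ N.reactions, v = r.2 - r.1}

/-- The rank `s` of the network. -/
noncomputable def rank : ℕ := Module.finrank ℝ N.stoichSubspace

/-- The deficiency `δ = n - ℓ - s`. -/
noncomputable def deficiency : ℤ :=
  (N.complexes.card : ℤ) - N.numLinkageClasses - N.rank

/-- The map of complexes `Y : ℝ^C → ℝ^S`, sending `ω_y ↦ y`. -/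
noncomputable def mapY : (↥N.complexes → ℝ) →ₗ[ℝ] (S → ℝ) :=
  ∑ y : ↥N.complexes, (LinearMap.proj y).smulRight (y : S → ℝ)

/-- The incidence map `I_a : ℝ^R → ℝ^C`, sending `ω_{y→y'} ↦ ω_{y'} - ω_y`. -/
noncomputable def incidence : (↥N.reactions → ℝ) →ₗ[ℝ] (↥N.complexes → ℝ) :=
  ∑ r : ↥N.reactions,
    (LinearMap.proj r).smulRight
      (Pi.single (⟨r.1.2, N.mem_target r.1 r.2⟩ : ↥N.complexes) 1
        - Pi.single (⟨r.1.1, N.mem_source r.1 r.2⟩ : ↥N.complexes) 1)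

/-- The Laplacian map `A_k x = Σ_{y→y'} k_{y→y'} x_y (ω_{y'} - ω_y)`. -/
noncomputable def laplacian (k : ↥N.reactions → ℝ) :
    (↥N.complexes → ℝ) →ₗ[ℝ] (↥N.complexes → ℝ) :=
  ∑ r : ↥N.reactions, k r •
    ((LinearMap.proj (⟨r.1.1, N.mem_source r.1 r.2⟩ : ↥N.complexes)).smulRight
      (Pi.single (⟨r.1.2, N.mem_target r.1 r.2⟩ : ↥N.complexes) 1
        - Pi.single (⟨r.1.1, N.mem_source r.1 r.2⟩ : ↥N.complexes) 1))

/-- A positive equilibrium of the PL-RDK system with rate constants `k` and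
kinetic-order assignment (T-matrix) `T`. -/
def IsPosEquilibrium (k : ↥N.reactions → ℝ) (T : (S → ℝ) → (S → ℝ)) (c : S → ℝ) : Prop :=
  (∀ i, 0 < c i) ∧
    ∑ r : ↥N.reactions, (k r * ∏ i, (c i) ^ (T r.1.1 i)) • ((r.1.2 : S → ℝ) - r.1.1) = 0

/-- The set of reactant complexes. -/
def reactantSet : Set (S → ℝ) := {y | ∃ y', (y, y') ∈ N.reactions}

/-- The reactant subspace `R = Im Y_res`. -/
def reactantSubspace : Submodule ℝ (S → ℝ) := Submodule.span ℝ N.reactantSet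

/-- The reactant deficiency `δ_ρ = n_r - q`. -/
noncomputable def reactantDeficiency : ℤ :=
  (Nat.card N.reactantSet : ℤ) - Module.finrank ℝ N.reactantSubspace

end CRN

/-!
For a positive equilibrium `c`, put `ψ_c = (c ^ T_{·,y})_{y ∈ C}`; the equilibrium condition says
`Y (A_k ψ_c) = 0`, so `A_k ψ_c` lies in `Im I_a ∩ Ker Y`, whose dimension is at most the
deficiency. With `δ = 1`, two equilibria `c*`, `c**` give a nontrivial combination
`a ψ_{c*} + b ψ_{c**} ∈ Ker A_k`. Kernel vectors of a Laplacian with positive rate constants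
vanish on nonterminal complexes: `|x|` is again in the kernel, and the balance of the set of
complexes from which a given `z` is reachable forces `|x|` to vanish on the sources of reactions
leaving that set, hence at `z`. So `ψ_{c**} / ψ_{c*}` takes the same value at `y` and `y'`, and
taking logarithms gives the claim.
-/

theorem Submodule.finrank_map_add_finrank_inf_ker {K V W : Type*} [DivisionRing K]
    [AddCommGroup V] [Module K V] [AddCommGroup W] [Module K W] [FiniteDimensional K V]
    (f : V →ₗ[K] W) (p : Submodule K V) :
    Module.finrank K (p.map f) + Module.finrank K ↥(p ⊓ LinearMap.ker f) = Module.finrank K p := by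
  rw [← LinearMap.range_domRestrict, ← Submodule.map_comap_subtype,
    Submodule.finrank_map_subtype_eq, ← LinearMap.ker_domRestrict]
  exact LinearMap.finrank_range_add_finrank_ker _

theorem exists_smul_add_smul_eq_zero_of_finrank_le_one {K V : Type*} [DivisionRing K]
    [AddCommGroup V] [Module K V] [FiniteDimensional K V] {p : Submodule K V}
    (hp : Module.finrank K p ≤ 1) {u v : V} (hu : u ∈ p) (hv : v ∈ p) :
    ∃ a b : K, (a ≠ 0 ∨ b ≠ 0) ∧ a • u + b • v = 0 := by
  by_contra! h
  have hli : LinearIndependent K ![u, v] :=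
    LinearIndependent.pair_iff.mpr fun a b hab => by
      by_contra hne
      exact h a b (not_and_or.mp hne) hab
  have hle : Submodule.span K (Set.range ![u, v]) ≤ p := by
    rw [Submodule.span_le, Set.range_subset_iff]
    intro i
    fin_cases i <;> simpa
  have := Submodule.finrank_mono hle
  rw [finrank_span_eq_card hli, Fintype.card_fin] at this
  omega

namespace CRN

variable {S : Type*} [Fintype S] (N : CRN S)

def source (r : N.reactions) : N.complexes := ⟨r.1.1, N.mem_source r.1 r.2⟩

def target (r : N.reactions) : N.complexes := ⟨r.1.2, N.mem_target r.1 r.2⟩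

lemma step_source_target (r : N.reactions) : N.step (N.source r) (N.target r) := r.2

lemma mapY_single (q : N.complexes) : N.mapY (Pi.single q 1) = q := by
  simp [mapY, LinearMap.sum_apply, Pi.single_apply]

lemma incidence_apply (f : N.reactions → ℝ) :
    N.incidence f = ∑ r, f r • (Pi.single (N.target r) 1 - Pi.single (N.source r) 1) := by
  simp [incidence, LinearMap.sum_apply, source, target]

lemma laplacian_eq_incidence (k : N.reactions → ℝ) (x : N.complexes → ℝ) :
    N.laplacian k x = N.incidence fun r => k r * x (N.source r) := by
  simp [laplacian, incidence_apply, LinearMap.sum_apply, source, target, mul_smul]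

lemma sum_laplacian_apply (k : N.reactions → ℝ) (x : N.complexes → ℝ)
    (F : Finset N.complexes) :
    ∑ q ∈ F, N.laplacian k x q =
      ∑ r with N.target r ∈ F, k r * x (N.source r)
        - ∑ r with N.source r ∈ F, k r * x (N.source r) := by
  simp [laplacian_eq_incidence, incidence_apply, Finset.sum_apply, Pi.single_apply,
    Finset.sum_comm (s := F), Finset.sum_filter, mul_sub]

lemma laplacian_apply_apply (k : N.reactions → ℝ) (x : N.complexes → ℝ) (q : N.complexes) :
    N.laplacian k x q =
      ∑ r with N.target r = q, k r * x (N.source r)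
        - ∑ r with N.source r = q, k r * x (N.source r) := by
  simpa using N.sum_laplacian_apply k x {q}

section LaplacianKernel

variable {N} {k : N.reactions → ℝ}

lemma sum_laplacian_apply_univ (x : N.complexes → ℝ) : ∑ q, N.laplacian k x q = 0 := by
  simp [sum_laplacian_apply]

lemma laplacian_abs_eq_zero (hk : ∀ r, 0 < k r) {x : N.complexes → ℝ}
    (hx : N.laplacian k x = 0) : N.laplacian k |x| = 0 := by
  have hnonneg : ∀ q, 0 ≤ N.laplacian k |x| q := by
    intro q
    have hq := congrFun hx q
    simp only [Pi.zero_apply] at hq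
    rw [laplacian_apply_apply, sub_eq_zero] at hq
    rw [laplacian_apply_apply, sub_nonneg]
    have hout : ∀ z : N.complexes → ℝ, ∑ r with N.source r = q, k r * z (N.source r)
        = (∑ r with N.source r = q, k r) * z q := by
      intro z
      rw [Finset.sum_mul]
      refine Finset.sum_congr rfl fun r hr => ?_
      rw [(Finset.mem_filter.mp hr).2]
    have hk_sum : 0 ≤ ∑ r with N.source r = q, k r :=
      Finset.sum_nonneg fun r _ => (hk r).le
    -- all reactions out of `q` carry `x q` with the same sign, so no cancellation occurs there
    calc ∑ r with N.source r = q, k r * |x| (N.source r)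
        = |∑ r with N.source r = q, k r * x (N.source r)| := by
          rw [hout, hout, abs_mul, abs_of_nonneg hk_sum, Pi.abs_apply]
      _ = |∑ r with N.target r = q, k r * x (N.source r)| := by rw [hq]
      _ ≤ ∑ r with N.target r = q, |k r * x (N.source r)| := Finset.abs_sum_le_sum_abs _ _
      _ = ∑ r with N.target r = q, k r * |x| (N.source r) := by
          simp only [abs_mul, abs_of_pos (hk _), Pi.abs_apply]
  -- the total flux vanishes, so every nonnegative balance defect is zero
  funext q
  exact (Finset.sum_eq_zero_iff_of_nonneg fun q _ => hnonneg q).mp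
    (sum_laplacian_apply_univ |x|) q (Finset.mem_univ q)

lemma exists_reaction_leaving_of_not_isTerminal {z : S → ℝ} (hz : z ∈ N.complexes)
    (hnt : ¬ N.IsTerminal z) :
    ∃ r, N.reach z (N.source r) ∧ N.reach (N.source r) z ∧ ¬ N.reach (N.target r) z := by
  obtain ⟨w, hzw, hwz⟩ : ∃ w, N.reach z w ∧ ¬ N.reach w z := by
    simpa [IsTerminal, hz] using hnt
  induction hzw with
  | refl => exact absurd Relation.ReflTransGen.refl hwz
  | @tail b c hzb hbc ih =>
    by_cases hbz : N.reach b z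
    · exact ⟨⟨(b, c), hbc⟩, hzb, hbz, hwz⟩
    · exact ih hbz

variable {μ : N.complexes → ℝ}

lemma apply_source_eq_zero_of_apply_target_eq_zero (hk : ∀ r, 0 < k r) (hμ : 0 ≤ μ)
    (hL : N.laplacian k μ = 0) (r : N.reactions) (hr : μ (N.target r) = 0) :
    μ (N.source r) = 0 := by
  have hbal := congrFun hL (N.target r)
  have hout : ∑ r' with N.source r' = N.target r, k r' * μ (N.source r') = 0 :=
    Finset.sum_eq_zero fun r' hr' => by rw [(Finset.mem_filter.mp hr').2, hr, mul_zero]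
  rw [laplacian_apply_apply, hout, sub_zero, Pi.zero_apply,
    Finset.sum_eq_zero_iff_of_nonneg fun r' _ => mul_nonneg (hk r').le (hμ _)] at hbal
  exact (mul_eq_zero.mp (hbal r (by simp))).resolve_left (hk r).ne'

lemma apply_eq_zero_of_reach (hk : ∀ r, 0 < k r) (hμ : 0 ≤ μ) (hL : N.laplacian k μ = 0)
    {z : N.complexes} (hz : μ z = 0) {v : S → ℝ} (hvz : N.reach v z) (hv : v ∈ N.complexes) :
    μ ⟨v, hv⟩ = 0 := by
  induction hvz using Relation.ReflTransGen.head_induction_on with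
  | refl => exact hz
  | @head a c hac _ ih =>
    exact apply_source_eq_zero_of_apply_target_eq_zero hk hμ hL ⟨(a, c), hac⟩
      (ih (N.mem_target _ hac))

lemma apply_source_eq_zero_of_leaving (hk : ∀ r, 0 < k r) (hμ : 0 ≤ μ)
    (hL : N.laplacian k μ = 0) {z : S → ℝ} (r : N.reactions) (hsrc : N.reach (N.source r) z)
    (htgt : ¬ N.reach (N.target r) z) : μ (N.source r) = 0 := by
  set F : Finset N.complexes := {q | N.reach q z}
  have hsub : Finset.univ.filter (fun r' => N.target r' ∈ F) ⊆
      Finset.univ.filter (fun r' => N.source r' ∈ F) := by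
    intro r' hr'
    simp only [F, Finset.mem_filter, Finset.mem_univ, true_and] at hr' ⊢
    exact Relation.ReflTransGen.head (N.step_source_target r') hr'
  -- no reaction enters `F` from outside, so the flux leaving `F` is zero
  have hflux := N.sum_laplacian_apply k μ F
  simp only [hL, Pi.zero_apply, Finset.sum_const_zero] at hflux
  rw [eq_comm, sub_eq_zero, ← Finset.sum_sdiff hsub,
    right_eq_add, Finset.sum_eq_zero_iff_of_nonneg fun r' _ => mul_nonneg (hk r').le (hμ _)]
    at hflux
  exact (mul_eq_zero.mp (hflux r (by simp [F, hsrc, htgt]))).resolve_left (hk r).ne'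

theorem laplacian_apply_eq_zero_of_nonterminal (hk : ∀ r, 0 < k r) {x : N.complexes → ℝ}
    (hx : N.laplacian k x = 0) {z : S → ℝ} (hz : N.Nonterminal z) : x ⟨z, hz.1⟩ = 0 := by
  have hμ : 0 ≤ |x| := abs_nonneg x
  have hL := laplacian_abs_eq_zero hk hx
  obtain ⟨r, hzr, hrz, hleave⟩ := N.exists_reaction_leaving_of_not_isTerminal hz.1 hz.2
  have hr := apply_source_eq_zero_of_leaving hk hμ hL r hrz hleave
  exact abs_eq_zero.mp (apply_eq_zero_of_reach hk hμ hL hr hzr hz.1)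

end LaplacianKernel

section Deficiency

lemma linked_symm {a b : S → ℝ} (h : N.linked a b) : N.linked b a := by
  induction h with
  | refl => exact Relation.ReflTransGen.refl
  | tail _ hbc ih => exact Relation.ReflTransGen.head hbc.symm ih

def linkageClassOf (q : N.complexes) : N.linkageClasses :=
  ⟨{y | y ∈ N.complexes ∧ N.linked q y}, q, q.2, rfl⟩

lemma linkageClassOf_surjective : Function.Surjective N.linkageClassOf := by
  rintro ⟨L, y, hy, rfl⟩
  exact ⟨⟨y, hy⟩, rfl⟩

lemma linkageClassOf_source_eq_target (r : N.reactions) :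
    N.linkageClassOf (N.source r) = N.linkageClassOf (N.target r) := by
  have hst : N.linked (N.source r) (N.target r) :=
    Relation.ReflTransGen.single (Or.inl (N.step_source_target r))
  ext y
  exact and_congr_right fun _ =>
    ⟨(N.linked_symm hst).trans, hst.trans⟩

instance : Finite N.linkageClasses := Finite.of_surjective _ N.linkageClassOf_surjective

lemma finrank_range_incidence_add_numLinkageClasses_le :
    Module.finrank ℝ (LinearMap.range N.incidence) + N.numLinkageClasses ≤ N.complexes.card := by
  have := Fintype.ofFinite N.linkageClasses
  let Φ := Finsupp.lmapDomain ℝ ℝ N.linkageClassOf ∘ₗ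
    (Finsupp.linearEquivFunOnFinite ℝ ℝ N.complexes).symm.toLinearMap
  have hΦ : Function.Surjective Φ :=
    (Finsupp.mapDomain_surjective N.linkageClassOf_surjective).comp
      (Finsupp.linearEquivFunOnFinite ℝ ℝ N.complexes).symm.surjective
  have hle : LinearMap.range N.incidence ≤ LinearMap.ker Φ := by
    rintro _ ⟨f, rfl⟩
    simp [Φ, incidence_apply, Finsupp.mapDomain_sub, linkageClassOf_source_eq_target]
  have hrn := LinearMap.finrank_range_add_finrank_ker Φ
  rw [LinearMap.range_eq_top.mpr hΦ, finrank_top, Module.finrank_finsupp_self,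
    Module.finrank_fintype_fun_eq_card, Fintype.card_coe] at hrn
  rw [numLinkageClasses, Nat.card_eq_fintype_card]
  have := Submodule.finrank_mono hle
  omega

lemma mapY_incidence_single (r : N.reactions) :
    N.mapY (N.incidence (Pi.single r 1)) = r.1.2 - r.1.1 := by
  simp [incidence_apply, Pi.single_apply, mapY_single, source, target]

lemma map_mapY_range_incidence :
    (LinearMap.range N.incidence).map N.mapY = N.stoichSubspace := by
  rw [← LinearMap.range_comp, LinearMap.range_eq_map, ← (Pi.basisFun ℝ N.reactions).span_eq,
    Submodule.map_span, stoichSubspace]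
  congr 1
  ext v
  simp [mapY_incidence_single, eq_comm]

lemma finrank_range_incidence_inf_ker_mapY_le_deficiency :
    (Module.finrank ℝ ↥(LinearMap.range N.incidence ⊓ LinearMap.ker N.mapY) : ℤ)
      ≤ N.deficiency := by
  have hrn := Submodule.finrank_map_add_finrank_inf_ker N.mapY (LinearMap.range N.incidence)
  rw [map_mapY_range_incidence] at hrn
  have := N.finrank_range_incidence_add_numLinkageClasses_le
  rw [deficiency, rank]
  omega

end Deficiency

theorem mul_eq_mul_of_nonterminal (hδ : N.deficiency ≤ 1) {k : N.reactions → ℝ}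
    (hk : ∀ r, 0 < k r) {u v : N.complexes → ℝ} (hu : N.mapY (N.laplacian k u) = 0)
    (hv : N.mapY (N.laplacian k v) = 0) {y y' : S → ℝ} (hy : N.Nonterminal y)
    (hy' : N.Nonterminal y') :
    v ⟨y, hy.1⟩ * u ⟨y', hy'.1⟩ = v ⟨y', hy'.1⟩ * u ⟨y, hy.1⟩ := by
  have hV : Module.finrank ℝ ↥(LinearMap.range N.incidence ⊓ LinearMap.ker N.mapY) ≤ 1 := by
    have := N.finrank_range_incidence_inf_ker_mapY_le_deficiency
    omega
  have hmem : ∀ x, N.mapY (N.laplacian k x) = 0 →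
      N.laplacian k x ∈ LinearMap.range N.incidence ⊓ LinearMap.ker N.mapY :=
    fun x hx => ⟨N.laplacian_eq_incidence k x ▸ LinearMap.mem_range_self _ _, hx⟩
  obtain ⟨a, b, hab, hzero⟩ :=
    exists_smul_add_smul_eq_zero_of_finrank_le_one hV (hmem u hu) (hmem v hv)
  rw [← map_smul, ← map_smul, ← map_add] at hzero
  have e := laplacian_apply_eq_zero_of_nonterminal hk hzero hy
  have e' := laplacian_apply_eq_zero_of_nonterminal hk hzero hy'
  simp only [Pi.add_apply, Pi.smul_apply, smul_eq_mul] at e e'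
  -- `(a, b) ≠ 0` is in the kernel of the matrix of values at `y`, `y'`, so its determinant is 0
  rcases hab with ha | hb
  · exact mul_left_cancel₀ ha (by linear_combination v ⟨y, hy.1⟩ * e' - v ⟨y', hy'.1⟩ * e)
  · exact mul_left_cancel₀ hb (by linear_combination u ⟨y', hy'.1⟩ * e - u ⟨y, hy.1⟩ * e')

noncomputable def kineticMonomial (T : (S → ℝ) → (S → ℝ)) (c : S → ℝ) (q : N.complexes) : ℝ :=
  ∏ i, c i ^ T q i

lemma kineticMonomial_pos (T : (S → ℝ) → (S → ℝ)) {c : S → ℝ} (hc : ∀ i, 0 < c i)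
    (q : N.complexes) : 0 < N.kineticMonomial T c q :=
  Finset.prod_pos fun i _ => Real.rpow_pos_of_pos (hc i) _

lemma log_kineticMonomial (T : (S → ℝ) → (S → ℝ)) {c : S → ℝ} (hc : ∀ i, 0 < c i)
    (q : N.complexes) : Real.log (N.kineticMonomial T c q) = ∑ i, T q i * Real.log (c i) := by
  rw [kineticMonomial, Real.log_prod fun i _ => (Real.rpow_pos_of_pos (hc i) _).ne']
  exact Finset.sum_congr rfl fun i _ => Real.log_rpow (hc i) _

lemma IsPosEquilibrium.mapY_laplacian_kineticMonomial {k : N.reactions → ℝ}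
    {T : (S → ℝ) → (S → ℝ)} {c : S → ℝ} (h : N.IsPosEquilibrium k T c) :
    N.mapY (N.laplacian k (N.kineticMonomial T c)) = 0 := by
  simpa [laplacian_eq_incidence, incidence_apply, mapY_single, kineticMonomial, source,
    target] using h.2

end CRN

/-- For a deficiency-one CRN with PL-RDK kinetics (rate constants `k`, T-matrix `T`)
admitting a positive equilibrium `cstar`: if `y, y'` are nonterminal complexes,
then every positive equilibrium `cstar2` satisfies
`(T_{·,y} − T_{·,y'}) · log (cstar2 / cstar) = 0`. -/
theorem nonterminal_log_relation {S : Type*} [Fintype S] (N : CRN S)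
    (hδ : N.deficiency = 1)
    (k : ↥N.reactions → ℝ) (hk : ∀ r, 0 < k r)
    (T : (S → ℝ) → (S → ℝ))
    (cstar : S → ℝ) (hstar : N.IsPosEquilibrium k T cstar)
    (y y' : S → ℝ) (hy : N.Nonterminal y) (hy' : N.Nonterminal y') :
    ∀ cstar2 : S → ℝ, N.IsPosEquilibrium k T cstar2 →
      ∑ i, (T y i - T y' i) * Real.log (cstar2 i / cstar i) = 0 := by
  intro cstar2 hstar2
  have hcross := congrArg Real.log <| N.mul_eq_mul_of_nonterminal hδ.le hk
    hstar.mapY_laplacian_kineticMonomial hstar2.mapY_laplacian_kineticMonomial hy hy'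
  have hpos := N.kineticMonomial_pos T hstar.1
  have hpos2 := N.kineticMonomial_pos T hstar2.1
  rw [Real.log_mul (hpos2 _).ne' (hpos _).ne', Real.log_mul (hpos2 _).ne' (hpos _).ne'] at hcross
  simp only [N.log_kineticMonomial T hstar.1, N.log_kineticMonomial T hstar2.1] at hcross
  simp only [Real.log_div (hstar2.1 _).ne' (hstar.1 _).ne', sub_mul, mul_sub,
    Finset.sum_sub_distrib]
  linarith
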